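/- Let f be an NΛ-periodic function of x₁ decomposed as f(x₁,x₂) = Σ_{ℓ=1}^{N} exp(2πiℓx₁/(NΛ)) f_ℓ(x₁,x₂) with each f_ℓ Λ-periodic in x₁. Let u : ℝ² → ℂ be compactly supported and let w = Ju be its Λ-periodic Bloch transform, (Ju)(α,x) = C_Λ Σ_{j∈ℤ} u(x₁+Λj,x₂) e^{−iαΛj}. Then J(f·u)(α,x) = Σ_{ℓ=1}^{N} w(α − 2πℓ/(NΛ), x) exp(2πiℓx₁/(NΛ)) f_ℓ(x), where w is extended 2π/Λ-periodically in α. -/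

import Mathlib

open MeasureTheory Real Complex

/-- The partial Floquet–Bloch transform with period `Λ` in the `x₁`-direction. -/
noncomputable def blochT (Λ : ℝ) (φ : ℝ × ℝ → ℂ) (α : ℝ) (x : ℝ × ℝ) : ℂ :=
  Real.sqrt (Λ / (2 * π)) *
    ∑' j : ℤ, φ (x.1 + Λ * j, x.2) * Complex.exp (-(Complex.I * α * (Λ * j)))

/-!
Write `f·u = Σ_ℓ e^{iβ_ℓ x₁} (f_ℓ u)` with `β_ℓ = 2πℓ/(NΛ)`. Each `f_ℓ u` has compact support, so
all Bloch series have finitely many nonzero terms and `J` is additive on this sum. A Λ-periodic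
factor `f_ℓ` takes the same value at every lattice translate `x₁ + Λj`, so it comes out of the
series; and `e^{iβ(x₁ + Λj)} e^{-iαΛj} = e^{iβx₁} e^{-i(α-β)Λj}`, so the character `e^{iβx₁}`
comes out at the price of shifting the Bloch variable `α` to `α - β`.
-/

open Topology

lemma isClosedEmbedding_prodMkLeft {X Y : Type*} [TopologicalSpace X] [TopologicalSpace Y]
    [T1Space Y] (y : Y) : IsClosedEmbedding (fun x : X ↦ (x, y)) := by
  refine ⟨isEmbedding_prodMkLeft y, ?_⟩
  have hrange : Set.range (fun x : X ↦ (x, y)) = Prod.snd ⁻¹' {y} := by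
    ext ⟨a, b⟩
    simp [eq_comm]
  rw [hrange]
  exact isClosed_singleton.preimage continuous_snd

lemma isClosedEmbedding_affine_intCast (a : ℝ) {Λ : ℝ} (hΛ : Λ ≠ 0) :
    IsClosedEmbedding (fun j : ℤ ↦ a + Λ * j) :=
  ((Homeomorph.mulLeft₀ Λ hΛ).trans (Homeomorph.addLeft a)).isClosedEmbedding.comp
    Real.isClosedEmbedding_intCast

lemma HasCompactSupport.summable_mul_lattice {φ : ℝ × ℝ → ℂ} (hφ : HasCompactSupport φ)
    {Λ : ℝ} (hΛ : Λ ≠ 0) (x : ℝ × ℝ) (c : ℤ → ℂ) :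
    Summable fun j : ℤ ↦ φ (x.1 + Λ * j, x.2) * c j := by
  have hslice : HasCompactSupport fun j : ℤ ↦ φ (x.1 + Λ * j, x.2) :=
    hφ.comp_isClosedEmbedding
      ((isClosedEmbedding_prodMkLeft x.2).comp (isClosedEmbedding_affine_intCast x.1 hΛ))
  exact summable_of_hasFiniteSupport
    (hslice.isCompact.finite_of_discrete.subset
      ((Function.support_mul_subset_left _ _).trans (subset_tsupport _)))

section Bloch

variable {Λ α : ℝ} {x : ℝ × ℝ}

lemma blochT_finsetSum {ι : Type*} (s : Finset ι) {φ : ι → ℝ × ℝ → ℂ}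
    (hφ : ∀ i ∈ s, HasCompactSupport (φ i)) (hΛ : Λ ≠ 0) :
    blochT Λ (fun y ↦ ∑ i ∈ s, φ i y) α x = ∑ i ∈ s, blochT Λ (φ i) α x := by
  simp only [blochT, Finset.sum_mul]
  rw [Summable.tsum_finsetSum fun i hi ↦ (hφ i hi).summable_mul_lattice hΛ x _, Finset.mul_sum]

lemma blochT_periodic_mul {g φ : ℝ × ℝ → ℂ} (hg : Function.Periodic (fun t ↦ g (t, x.2)) Λ) :
    blochT Λ (fun y ↦ g y * φ y) α x = g x * blochT Λ φ α x := by
  have hlattice (j : ℤ) : g (x.1 + Λ * j, x.2) = g x := by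
    rw [mul_comm]
    exact hg.int_mul j x.1
  simp only [blochT, hlattice, mul_assoc, tsum_mul_left]
  ring

lemma blochT_exp_mul (β : ℝ) (φ : ℝ × ℝ → ℂ) :
    blochT Λ (fun y ↦ exp (I * β * y.1) * φ y) α x =
      exp (I * β * x.1) * blochT Λ φ (α - β) x := by
  simp only [blochT, ← tsum_mul_left]
  refine tsum_congr fun j ↦ ?_
  have hshift : exp (I * β * ↑(x.1 + Λ * j)) * exp (-(I * α * (Λ * j))) =
      exp (I * β * x.1) * exp (-(I * ↑(α - β) * (Λ * j))) := by
    rw [← Complex.exp_add, ← Complex.exp_add]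
    push_cast
    ring_nf
  linear_combination (Real.sqrt (Λ / (2 * π)) : ℂ) * φ (x.1 + Λ * j, x.2) * hshift

end Bloch

theorem bloch_of_periodic_multiplication_general
    (N : ℕ) (Λ : ℝ) (hΛ : 0 < Λ)
    (f : ℝ × ℝ → ℂ) (fℓ : ℕ → ℝ × ℝ → ℂ)
    (hper : ∀ ℓ ∈ Finset.Icc 1 N, ∀ x : ℝ × ℝ, fℓ ℓ (x.1 + Λ, x.2) = fℓ ℓ x)
    (hf : ∀ x : ℝ × ℝ, f x = ∑ ℓ ∈ Finset.Icc 1 N,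
      Complex.exp (2 * π * Complex.I * ℓ * x.1 / (N * Λ)) * fℓ ℓ x)
    (u : ℝ × ℝ → ℂ) (hus : HasCompactSupport u) :
    ∀ (α : ℝ) (x : ℝ × ℝ),
      blochT Λ (fun y => f y * u y) α x =
        ∑ ℓ ∈ Finset.Icc 1 N,
          blochT Λ u (α - 2 * π * ℓ / (N * Λ)) x *
            Complex.exp (2 * π * Complex.I * ℓ * x.1 / (N * Λ)) * fℓ ℓ x := by
  intro α x
  have hexp (ℓ : ℕ) (t : ℝ) : exp (2 * π * I * ℓ * t / (N * Λ)) =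
      exp (I * ↑(2 * π * ℓ / (N * Λ) : ℝ) * t) := by
    push_cast
    ring_nf
  have hfu : (fun y ↦ f y * u y) = fun y ↦
      ∑ ℓ ∈ Finset.Icc 1 N, exp (I * ↑(2 * π * ℓ / (N * Λ) : ℝ) * y.1) * (fℓ ℓ y * u y) := by
    funext y
    rw [hf, Finset.sum_mul]
    refine Finset.sum_congr rfl fun ℓ _ ↦ ?_
    rw [hexp, mul_assoc]
  rw [hfu, blochT_finsetSum _ (fun ℓ _ ↦ ?compact) hΛ.ne']
  case compact => exact hus.mul_left.mul_left
  refine Finset.sum_congr rfl fun ℓ hℓ ↦ ?_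
  rw [blochT_exp_mul, blochT_periodic_mul fun t ↦ hper ℓ hℓ (t, x.2), hexp]
  ring

/-- Multiplying by an `NΛ`-periodic coefficient `f = Σ_{ℓ=1}^N e^{2πiℓx₁/(NΛ)} f_ℓ`
(with each `f_ℓ` Λ-periodic in `x₁`) shifts the Bloch variable:
`J(f·u)(α,x) = Σ_{ℓ=1}^N (Ju)(α − 2πℓ/(NΛ), x) e^{2πiℓx₁/(NΛ)} f_ℓ(x)`. -/
theorem bloch_of_periodic_multiplication
    (N : ℕ) (hN : 0 < N) (Λ : ℝ) (hΛ : 0 < Λ)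
    (f : ℝ × ℝ → ℂ) (fℓ : ℕ → ℝ × ℝ → ℂ)
    (hper : ∀ ℓ ∈ Finset.Icc 1 N, ∀ x : ℝ × ℝ, fℓ ℓ (x.1 + Λ, x.2) = fℓ ℓ x)
    (hf : ∀ x : ℝ × ℝ, f x = ∑ ℓ ∈ Finset.Icc 1 N,
      Complex.exp (2 * π * Complex.I * ℓ * x.1 / (N * Λ)) * fℓ ℓ x)
    (u : ℝ × ℝ → ℂ) (hu : Continuous u) (hus : HasCompactSupport u) :
    ∀ (α : ℝ) (x : ℝ × ℝ),
      blochT Λ (fun y => f y * u y) α x =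
        ∑ ℓ ∈ Finset.Icc 1 N,
          blochT Λ u (α - 2 * π * ℓ / (N * Λ)) x *
            Complex.exp (2 * π * Complex.I * ℓ * x.1 / (N * Λ)) * fℓ ℓ x :=
  bloch_of_periodic_multiplication_general N Λ hΛ f fℓ hper hf u hus
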